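/- arXiv:1210.6953 — 3 statements merged into one kernel-verified Lean document; each statement's English description precedes it below -/
import Mathlib

section
/- Fix 2 ≤ p < ∞. Let P_1, ..., P_l ∈ C[x] be pairwise coprime and U_1, ..., U_l ∈ C[x] satisfy Σ_j U_j Π_{i≠j} P_i = 1. For a complex sequence α, the following are equivalent: (i) α ∈ ℓ^p and P_1(S)···P_l(S)α ∈ ℓ^2; (ii) setting β^{(j)} = U_j(S) Π_{i≠j} P_i(S) α, each β^{(j)} ∈ ℓ^p, P_j(S)β^{(j)} ∈ ℓ^2, and α = β^{(1)} + ··· + β^{(l)}; (iii) there exist sequences β^{(1)}, ..., β^{(l)} ∈ ℓ^p with α = β^{(1)} + ··· + β^{(l)} and P_j(S)β^{(j)} ∈ ℓ^2 for each j. -/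
/-
Every operator Q(S) is a finite linear combination of shifts, so it preserves each ℓ^q, and these
operators commute. Hence ∑ⱼ Uⱼ ∏_{i≠j} Pᵢ = 1 splits α into the βⱼ, and Pⱼ(S)βⱼ = Uⱼ(S)(∏ᵢ Pᵢ)(S)α
lies in ℓ²; conversely (∏ᵢ Pᵢ)(S)βⱼ = (∏_{i≠j} Pᵢ)(S)Pⱼ(S)βⱼ lies in ℓ² for every decomposition.
-/

open Polynomial ENNReal Finset

/-- The action of the polynomial `Q` in the shift operator `S`, `(Sx)_n = x_{n+1}`,
on a complex sequence. -/
noncomputable def polyShift (Q : Polynomial ℂ) (γ : ℕ → ℂ) : ℕ → ℂ :=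
  fun n => Q.sum fun i c => c * γ (n + i)

noncomputable def seqShift : Module.End ℂ (ℕ → ℂ) :=
  LinearMap.funLeft ℂ ℂ (· + 1)

theorem seqShift_pow_apply (k : ℕ) (γ : ℕ → ℂ) (n : ℕ) : (seqShift ^ k) γ n = γ (n + k) := by
  induction k generalizing γ with
  | zero => rfl
  | succ k ih => rw [pow_succ, Module.End.mul_apply, ih]; rfl

theorem polyShift_eq_aeval (Q : ℂ[X]) (γ : ℕ → ℂ) : polyShift Q γ = aeval seqShift Q γ := by
  ext n
  simp [polyShift, Polynomial.sum, aeval_def, eval₂_eq_sum, Algebra.algebraMap_eq_smul_one,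
    LinearMap.sum_apply, Finset.sum_apply, seqShift_pow_apply]

theorem polyShift_mul (Q R : ℂ[X]) (γ : ℕ → ℂ) :
    polyShift (Q * R) γ = polyShift Q (polyShift R γ) := by
  simp only [polyShift_eq_aeval, map_mul, Module.End.mul_apply]

theorem polyShift_one (γ : ℕ → ℂ) : polyShift 1 γ = γ := by
  simp only [polyShift_eq_aeval, map_one, Module.End.one_apply]

theorem polyShift_sum {ι : Type*} (s : Finset ι) (Q : ι → ℂ[X]) (γ : ℕ → ℂ) :
    polyShift (∑ j ∈ s, Q j) γ = fun n => ∑ j ∈ s, polyShift (Q j) γ n := by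
  ext n
  simp only [polyShift_eq_aeval, map_sum, LinearMap.sum_apply, Finset.sum_apply]

theorem polyShift_sum_right {ι : Type*} (s : Finset ι) (Q : ℂ[X]) (β : ι → ℕ → ℂ) :
    polyShift Q (fun n => ∑ j ∈ s, β j n) = fun n => ∑ j ∈ s, polyShift Q (β j) n := by
  simp only [polyShift_eq_aeval, ← Finset.sum_fn, map_sum]

theorem Memℓp.comp_injective {α β E : Type*} [NormedAddCommGroup E] {p : ℝ≥0∞} {f : α → E}
    (hf : Memℓp f p) {g : β → α} (hg : g.Injective) : Memℓp (f ∘ g) p := by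
  rcases p.trichotomy with rfl | rfl | hp
  · exact memℓp_zero <| (hf.finite_dsupport.preimage hg.injOn).subset fun _ h => h
  · exact memℓp_infty <| hf.bddAbove.mono <| Set.range_comp_subset_range g fun i => ‖f i‖
  · exact memℓp_gen <| (hf.summable hp).comp_injective hg

theorem memℓp_polyShift {p : ℝ≥0∞} {γ : ℕ → ℂ} (hγ : Memℓp γ p) (Q : ℂ[X]) :
    Memℓp (polyShift Q γ) p :=
  Memℓp.finsetSum _ fun i _ => (hγ.comp_injective (add_left_injective i)).const_mul (Q.coeff i)

theorem memℓp_polyShift_of_dvd {p : ℝ≥0∞} {γ : ℕ → ℂ} {Q R : ℂ[X]}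
    (h : Memℓp (polyShift Q γ) p) (hQR : Q ∣ R) : Memℓp (polyShift R γ) p := by
  obtain ⟨C, rfl⟩ := hQR
  rw [mul_comm, polyShift_mul]
  exact memℓp_polyShift h C

theorem decomposition_tfae_general (p : ℝ≥0∞)
    (l : ℕ) (P U : Fin l → Polynomial ℂ)
    (hU : ∑ j : Fin l, U j * ∏ i ∈ Finset.univ.erase j, P i = 1)
    (α : ℕ → ℂ) :
    List.TFAE
      [ Memℓp α p ∧ Memℓp (polyShift (∏ i : Fin l, P i) α) 2,
        (∀ j : Fin l,
            Memℓp (polyShift (U j * ∏ i ∈ Finset.univ.erase j, P i) α) p ∧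
            Memℓp (polyShift (P j) (polyShift (U j * ∏ i ∈ Finset.univ.erase j, P i) α)) 2) ∧
          α = fun n => ∑ j : Fin l, polyShift (U j * ∏ i ∈ Finset.univ.erase j, P i) α n,
        ∃ β : Fin l → (ℕ → ℂ),
          (∀ j, Memℓp (β j) p ∧ Memℓp (polyShift (P j) (β j)) 2) ∧
            α = fun n => ∑ j : Fin l, β j n ] := by
  tfae_have 1 → 2 := by
    rintro ⟨hα, hPα⟩
    refine ⟨fun j => ⟨memℓp_polyShift hα _, ?_⟩, ?_⟩
    · have hdvd : ∏ i, P i ∣ P j * (U j * ∏ i ∈ univ.erase j, P i) := by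
        rw [← mul_prod_erase univ P (mem_univ j), mul_left_comm]
        exact dvd_mul_left _ _
      rw [← polyShift_mul]
      exact memℓp_polyShift_of_dvd hPα hdvd
    · rw [← polyShift_sum, hU, polyShift_one]
  tfae_have 2 → 3 := fun ⟨hβ, hα⟩ => ⟨_, hβ, hα⟩
  tfae_have 3 → 1 := by
    rintro ⟨β, hβ, rfl⟩
    refine ⟨Memℓp.finsetSum _ fun j _ => (hβ j).1, ?_⟩
    rw [polyShift_sum_right]
    exact Memℓp.finsetSum _ fun j _ =>
      memℓp_polyShift_of_dvd (hβ j).2 (dvd_prod_of_mem P (mem_univ j))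
  tfae_finish

theorem decomposition_tfae (p : ℝ≥0∞) (hp2 : 2 ≤ p) (hptop : p ≠ ∞)
    (l : ℕ) (hl : 1 ≤ l) (P U : Fin l → Polynomial ℂ)
    (hP : Pairwise (Function.onFun IsCoprime P))
    (hU : ∑ j : Fin l, U j * ∏ i ∈ Finset.univ.erase j, P i = 1)
    (α : ℕ → ℂ) :
    List.TFAE
      [ Memℓp α p ∧ Memℓp (polyShift (∏ i : Fin l, P i) α) 2,
        (∀ j : Fin l,
            Memℓp (polyShift (U j * ∏ i ∈ Finset.univ.erase j, P i) α) p ∧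
            Memℓp (polyShift (P j) (polyShift (U j * ∏ i ∈ Finset.univ.erase j, P i) α)) 2) ∧
          α = fun n => ∑ j : Fin l, polyShift (U j * ∏ i ∈ Finset.univ.erase j, P i) α n,
        ∃ β : Fin l → (ℕ → ℂ),
          (∀ j, Memℓp (β j) p ∧ Memℓp (polyShift (P j) (β j)) 2) ∧
            α = fun n => ∑ j : Fin l, β j n ] :=
  decomposition_tfae_general p l P U hU α
end

section
/- The sequence α_n = (1 + (-1)^n)/(3(n+1)^{1/4}) satisfies (S-1)(S+1)α ∈ ℓ², i.e., Σ_{n=0}^∞ |α_{n+2} - α_n|² < ∞. -/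
lemma key_aux (X Y : ℝ) (hX : 0 < X) (hXY : X ≤ Y) (h : Y^4 = X^4 + 2) :
    (2/(3*X) - 2/(3*Y))^2 ≤ 1/(9*X^10) := by
  have hY : 0 < Y := lt_of_lt_of_le hX hXY
  have h1 : (Y - X) * (4 * X^3) ≤ 2 := by
    nlinarith [mul_nonneg (sq_nonneg (Y - X)) (by positivity : (0:ℝ) ≤ Y^2 + 2*X*Y + 3*X^2)]
  have hd : 2/(3*X) - 2/(3*Y) = 2*(Y-X)/(3*(X*Y)) := by
    field_simp
  have h2 : 2*(Y-X)/(3*(X*Y)) ≤ 1/(3*X^5) := by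
    rw [div_le_div_iff₀ (by positivity) (by positivity)]
    have hXY2 : X^2 ≤ X*Y := by nlinarith
    nlinarith [mul_le_mul_of_nonneg_right h1 (by positivity : (0:ℝ) ≤ X^2),
      mul_le_mul_of_nonneg_left hXY (le_of_lt hX)]
  have hd0 : 0 ≤ 2/(3*X) - 2/(3*Y) := by
    have : 2/(3*Y) ≤ 2/(3*X) := by
      apply div_le_div_of_nonneg_left (by norm_num) (by positivity)
      nlinarith
    linarith
  have h3 : 2/(3*X) - 2/(3*Y) ≤ 1/(3*X^5) := hd ▸ h2
  calc (2/(3*X) - 2/(3*Y))^2 ≤ (1/(3*X^5))^2 := by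
        apply pow_le_pow_left₀ hd0 h3
    _ = 1/(9*X^10) := by ring
  
theorem alpha_diff_in_l2 :
    Summable (fun n : ℕ =>
      |((1 + (-1 : ℝ) ^ (n + 2)) / (3 * ((n : ℝ) + 2 + 1) ^ ((1 : ℝ) / 4)))
        - ((1 + (-1 : ℝ) ^ n) / (3 * ((n : ℝ) + 1) ^ ((1 : ℝ) / 4)))| ^ 2) := by
  have hg : Summable (fun n : ℕ => (1/9) * ((n:ℝ)+1)^(-(5/2):ℝ)) := by
    apply Summable.mul_left
    have h0 : Summable (fun n : ℕ => (n:ℝ)^(-(5/2):ℝ)) :=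
      Real.summable_nat_rpow.mpr (by norm_num)
    have h2 := (summable_nat_add_iff 1).mpr h0
    apply h2.congr
    intro n; push_cast; ring_nf
  apply Summable.of_nonneg_of_le (fun n => by positivity) _ hg
  intro n
  rcases Nat.even_or_odd n with he | ho
  · -- even case
    have hpow : (-1 : ℝ)^n = 1 := he.neg_one_pow
    have hpow2 : (-1 : ℝ)^(n+2) = 1 := by
      rw [pow_add]; simp [hpow]
    set x : ℝ := (n:ℝ) + 1 with hx
    have hx0 : (0:ℝ) < x := by positivity
    set X : ℝ := x ^ ((1:ℝ)/4) with hX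
    set Y : ℝ := (x+2) ^ ((1:ℝ)/4) with hY
    have hX0 : 0 < X := Real.rpow_pos_of_pos hx0 _
    have hXle : X ≤ Y := Real.rpow_le_rpow hx0.le (by linarith) (by norm_num)
    have hX4 : X^4 = x := by
      rw [hX, ← Real.rpow_natCast (x ^ ((1:ℝ)/4)) 4, ← Real.rpow_mul hx0.le]
      norm_num
    have hY4 : Y^4 = x + 2 := by
      rw [hY, ← Real.rpow_natCast ((x+2) ^ ((1:ℝ)/4)) 4, ← Real.rpow_mul (by linarith)]
      norm_num
    have key := key_aux X Y hX0 hXle (by rw [hY4, hX4])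
    have hX10 : X^10 = x ^ ((5:ℝ)/2) := by
      rw [hX, ← Real.rpow_natCast (x ^ ((1:ℝ)/4)) 10, ← Real.rpow_mul hx0.le]
      norm_num
    have hexpr : ((n : ℝ) + 2 + 1) = x + 2 := by rw [hx]; ring
    rw [hpow, hpow2, hexpr]
    have habs : |(1+1) / (3 * Y) - (1+1) / (3 * X)| = 2/(3*X) - 2/(3*Y) := by
      rw [abs_sub_comm]
      rw [abs_of_nonneg]
      · norm_num
      · have : 2/(3*Y) ≤ 2/(3*X) := by
          apply div_le_div_of_nonneg_left (by norm_num) (by positivity)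
          nlinarith
        norm_num
        linarith
    rw [habs]
    calc (2/(3*X) - 2/(3*Y))^2 ≤ 1/(9*X^10) := key
      _ = 1/9 * x ^ (-(5/2):ℝ) := by
          rw [Real.rpow_neg hx0.le, ← hX10]
          field_simp
  · -- odd case
    have hpow : (-1 : ℝ)^n = -1 := ho.neg_one_pow
    have hpow2 : (-1 : ℝ)^(n+2) = -1 := by
      rw [pow_add]; simp [hpow]
    rw [hpow, hpow2]
    simp
    positivity
end

section
/- The sequence α_n = (1 + (-1)^n)/(3(n+1)^{1/4}) satisfies (S-1)²α ∉ ℓ⁴, i.e., Σ_{n=0}^∞ |α_{n+2} - 2α_{n+1} + α_n|⁴ = ∞. -/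
lemma aux_rpow_quarter_pow (x : ℝ) (hx : 0 ≤ x) : (x ^ ((1:ℝ)/4)) ^ (4:ℕ) = x := by
  rw [← Real.rpow_natCast (x ^ ((1:ℝ)/4)) 4, ← Real.rpow_mul hx]
  norm_num

lemma aux_not_summable : ¬ Summable (fun k : ℕ => (8:ℝ)/81 * (1 / ((k:ℝ) + 3))) := by
  rw [summable_mul_left_iff (by norm_num : (8:ℝ)/81 ≠ 0)]
  have := (summable_nat_add_iff (f := fun n : ℕ => 1 / (n:ℝ)) 3).not.mpr
    Real.not_summable_one_div_natCast
  simpa [add_comm] using this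

theorem alpha_second_diff_not_in_l4 :
    ¬ Summable (fun n : ℕ =>
      |((1 + (-1 : ℝ) ^ (n + 2)) / (3 * ((n : ℝ) + 2 + 1) ^ ((1 : ℝ) / 4)))
        - 2 * ((1 + (-1 : ℝ) ^ (n + 1)) / (3 * ((n : ℝ) + 1 + 1) ^ ((1 : ℝ) / 4)))
        + ((1 + (-1 : ℝ) ^ n) / (3 * ((n : ℝ) + 1) ^ ((1 : ℝ) / 4)))| ^ 4) := by
  intro h
  have hinj : Function.Injective (fun k : ℕ => 2 * k) := fun a b hab => by
    change 2 * a = 2 * b at hab; omega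
  have h2 := h.comp_injective hinj
  apply aux_not_summable
  apply h2.of_nonneg_of_le (fun k => by positivity)
  intro k
  simp only [Function.comp]
  have e2 : (-1:ℝ) ^ (2*k) = 1 := (even_two_mul k).neg_one_pow
  have e1 : (-1:ℝ) ^ (2*k+1) = -1 := (odd_two_mul_add_one k).neg_one_pow
  have e3 : (-1:ℝ) ^ (2*k+2) = 1 := by rw [pow_add, e2]; norm_num
  rw [e1, e2, e3]
  push_cast
  rw [show (1:ℝ) + -1 = 0 from by norm_num]
  simp only [zero_div, mul_zero, sub_zero]
  rw [show (2*(k:ℝ)+2+1) = 2*(k:ℝ)+3 from by ring]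
  rw [show (1:ℝ) + 1 = 2 from by norm_num]
  rw [abs_of_nonneg (by positivity)]
  have h3pos : (0:ℝ) < (2*(k:ℝ) + 3) ^ ((1:ℝ)/4) := Real.rpow_pos_of_pos (by positivity) _
  have step1 : (2 / (3 * (2*(k:ℝ) + 3) ^ ((1:ℝ)/4))) ^ (4:ℕ)
      ≤ (2 / (3 * (2*(k:ℝ) + 3) ^ ((1:ℝ)/4)) + 2 / (3 * (2*(k:ℝ) + 1) ^ ((1:ℝ)/4))) ^ (4:ℕ) := by
    apply pow_le_pow_left₀ (by positivity)
    exact le_add_of_nonneg_right (by positivity)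
  refine le_trans ?_ step1
  have hq : ((2*(k:ℝ) + 3) ^ ((1:ℝ)/4)) ^ (4:ℕ) = 2*(k:ℝ) + 3 :=
    aux_rpow_quarter_pow _ (by positivity)
  rw [div_pow, mul_pow, hq]
  rw [show (8:ℝ)/81 * (1/((k:ℝ)+3)) = 8 / (81*((k:ℝ)+3)) from by rw [div_mul_div_comm]; norm_num]
  rw [div_le_div_iff₀ (by positivity) (by positivity)]
  have hk : (0:ℝ) ≤ (k:ℝ) := Nat.cast_nonneg k
  nlinarith
end
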